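/- arXiv:0903.4567 — 5 statements merged into one kernel-verified Lean document; each statement's English description precedes it below -/
import Mathlib

section
/- If G is a graph with independence number at most k and at least dk+1 vertices, then G contains an induced subgraph H with at most dk+1 vertices and minimum degree at least d. -/
/-!
Induction on `k`. If some vertex `v` of `S` has fewer than `d` neighbours in `S`, discard `v`
together with its neighbours: fewer than `d + 1` vertices are lost, and every independent set
among the remaining non-neighbours of `v` extends by `v`, so the independence number drops.
Otherwise `S` itself has minimum degree at least `d`. Starting from any `d * k + 1` vertices
gives the size bound.
-/

open Finset

namespace SimpleGraph

variable {V : Type*} [DecidableEq V] (G : SimpleGraph V)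

lemma isIndepSet_insert_of_forall_not_adj {v : V} {I : Finset V} (hI : G.IsIndepSet (I : Set V))
    (hv : ∀ u ∈ I, ¬G.Adj v u) : G.IsIndepSet (insert v I : Finset V) := by
  rw [coe_insert]
  exact Set.pairwise_insert.mpr ⟨hI, fun u hu _ => ⟨hv u hu, fun h => hv u hu h.symm⟩⟩

variable [DecidableRel G.Adj]

lemma card_le_card_filter_not_adj_add {d : ℕ} {S : Finset V} {v : V} (hv : v ∈ S)
    (hdeg : #(S.filter (G.Adj v)) < d) :
    #S ≤ #((S.erase v).filter fun u => ¬G.Adj v u) + d := by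
  have hsplit := card_filter_add_card_filter_not (s := S.erase v) (G.Adj v)
  have hadj : #((S.erase v).filter (G.Adj v)) ≤ #(S.filter (G.Adj v)) :=
    card_le_card (filter_subset_filter _ (erase_subset v S))
  have := card_erase_add_one hv
  omega

theorem exists_nonempty_subset_forall_le_card_filter_adj (d k : ℕ) (S : Finset V)
    (hS : d * k + 1 ≤ #S) (hα : ∀ I ⊆ S, G.IsIndepSet (I : Set V) → #I ≤ k) :
    ∃ T ⊆ S, T.Nonempty ∧ ∀ v ∈ T, d ≤ #(T.filter (G.Adj v)) := by
  induction k generalizing S with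
  | zero =>
    obtain ⟨v, hv⟩ := card_pos.mp (by omega : 0 < #S)
    simpa using hα {v} (singleton_subset_iff.mpr hv) (by simp)
  | succ k ih =>
    by_cases hgood : ∀ v ∈ S, d ≤ #(S.filter (G.Adj v))
    · exact ⟨S, Subset.rfl, card_pos.mp (by omega), hgood⟩
    push Not at hgood
    obtain ⟨v, hv, hdeg⟩ := hgood
    set R := (S.erase v).filter fun u => ¬G.Adj v u
    have hRS : R ⊆ S := (filter_subset _ _).trans (erase_subset v S)
    have hR : d * k + 1 ≤ #R := by
      have : #S ≤ #R + d := G.card_le_card_filter_not_adj_add hv hdeg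
      rw [Nat.mul_succ] at hS
      omega
    have hαR : ∀ I ⊆ R, G.IsIndepSet (I : Set V) → #I ≤ k := by
      intro I hIR hI
      have hvI : v ∉ I := fun h => by simpa [R] using hIR h
      have hnadj : ∀ u ∈ I, ¬G.Adj v u := fun u hu => (mem_filter.mp (hIR hu)).2
      have := hα (insert v I) (insert_subset hv (hIR.trans hRS))
        (G.isIndepSet_insert_of_forall_not_adj hI hnadj)
      rw [card_insert_of_notMem hvI] at this
      omega
    obtain ⟨T, hTR, hT⟩ := ih R hR hαR
    exact ⟨T, hTR.trans hRS, hT⟩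

end SimpleGraph

/-- If `G` has independence number at most `k` and at least `dk+1` vertices, then `G`
contains an induced subgraph on at most `dk+1` vertices with minimum degree at least `d`. -/
theorem stmt_4 {V : Type*} [Fintype V] (G : SimpleGraph V) [DecidableRel G.Adj] (k d : ℕ)
    (hα : ∀ S : Finset V, (∀ u ∈ S, ∀ w ∈ S, u ≠ w → ¬ G.Adj u w) → S.card ≤ k)
    (hn : d * k + 1 ≤ Fintype.card V) :
    ∃ S : Finset V, S.Nonempty ∧ S.card ≤ d * k + 1 ∧
      ∀ v ∈ S, d ≤ (S.filter (fun u => G.Adj v u)).card := by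
  classical
  obtain ⟨S₀, -, hS₀⟩ := exists_subset_card_eq (s := (univ : Finset V)) (n := d * k + 1)
    (by simpa using hn)
  obtain ⟨T, hTS₀, hT, hdeg⟩ := G.exists_nonempty_subset_forall_le_card_filter_adj d k S₀
    hS₀.ge fun I _ hI => hα I fun _ hu _ hw => hI hu hw
  exact ⟨T, hT, hS₀ ▸ card_le_card hTS₀, hdeg⟩
end

section
/- Let G be a graph with independence number at most k, and let W be a path (or cycle) in G. Then any interval of at least 2k+1 consecutive vertices of W contains two vertices at distance at least 2 and at most 2k along W that are adjacent in G. -/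
/-!
The `k + 1` vertices of `W` at even positions are distinct, so they cannot form an independent
set; two of them are adjacent, and distinct even positions are at distance at least `2`.
-/

namespace SimpleGraph

variable {V ι : Type*} (G : SimpleGraph V) {k : ℕ}

theorem exists_lt_adj_of_injective [Fintype ι] [LinearOrder ι]
    (hα : ∀ S : Finset V, (∀ u ∈ S, ∀ w ∈ S, u ≠ w → ¬ G.Adj u w) → S.card ≤ k)
    {g : ι → V} (hg : Function.Injective g) (hcard : k < Fintype.card ι) :
    ∃ a b, a < b ∧ G.Adj (g a) (g b) := by
  classical
  by_contra! hnone
  have hindep : ∀ u ∈ Finset.univ.image g, ∀ w ∈ Finset.univ.image g, u ≠ w → ¬ G.Adj u w := by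
    simp only [Finset.mem_image, Finset.mem_univ, true_and]
    rintro _ ⟨a, rfl⟩ _ ⟨b, rfl⟩ hab
    rcases lt_or_gt_of_ne (hg.ne_iff.mp hab) with h | h
    · exact hnone a b h
    · exact fun hadj => hnone b a h hadj.symm
  have := hα _ hindep
  rw [Finset.card_image_of_injective _ hg, Finset.card_univ] at this
  omega

end SimpleGraph

theorem stmt_5_general {V : Type*} (G : SimpleGraph V) (k : ℕ)
    (hα : ∀ S : Finset V, (∀ u ∈ S, ∀ w ∈ S, u ≠ w → ¬ G.Adj u w) → S.card ≤ k)
    (f : Fin (2 * k + 1) → V) (hinj : Function.Injective f) :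
    ∃ i j : Fin (2 * k + 1), (i : ℕ) + 2 ≤ (j : ℕ) ∧ G.Adj (f i) (f j) := by
  let even : Fin (k + 1) → Fin (2 * k + 1) := fun i => ⟨2 * i, by omega⟩
  have heven : Function.Injective even := fun a b hab => Fin.ext (by simpa [even] using hab)
  obtain ⟨a, b, hab, hadj⟩ :=
    G.exists_lt_adj_of_injective hα (hinj.comp heven) (by simp)
  exact ⟨even a, even b, by simp only [even]; omega, hadj⟩

/-- In a graph with independence number at most `k`, any `2k+1` consecutive vertices of
a path (or cycle) contain two vertices at distance at least `2` (and hence at most `2k`)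
along the path that are adjacent in `G` (a "jump"). -/
theorem stmt_5 {V : Type*} (G : SimpleGraph V) (k : ℕ)
    (hα : ∀ S : Finset V, (∀ u ∈ S, ∀ w ∈ S, u ≠ w → ¬ G.Adj u w) → S.card ≤ k)
    (f : Fin (2 * k + 1) → V) (hinj : Function.Injective f)
    (hadj : ∀ i : Fin (2 * k), G.Adj (f i.castSucc) (f i.succ)) :
    ∃ i j : Fin (2 * k + 1), (i : ℕ) + 2 ≤ (j : ℕ) ∧ G.Adj (f i) (f j) :=
  stmt_5_general G k hα f hinj
end

section
/- Let G be a graph with independence number at most k, and suppose P is a path of length p in G joining vertices x and y. Then for any 1 ≤ q ≤ p there is a path in G joining x and y of some length ℓ with q ≤ ℓ ≤ q + 2k − 2. -/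
/-!
On a path of length at least `2k`, the `k + 1` vertices at even positions `0, 2, …, 2k` cannot
be independent, so two of them, at positions `2i < 2j`, are adjacent. Jumping along that edge
shortens the path by `2(j - i) - 1`, an odd number between `1` and `2k - 1`. Repeating while the
length exceeds `q + 2k - 2` never drops below `q`, and stops inside `[q, q + 2k - 2]`.
-/

open SimpleGraph

namespace SimpleGraph.Walk

variable {V : Type*} {G : SimpleGraph V} {x y : V}

def shortcut (p : G.Walk x y) (a b : ℕ) (h : G.Adj (p.getVert a) (p.getVert b)) : G.Walk x y :=
  (p.take a).append (cons h (p.drop b))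

lemma length_shortcut (p : G.Walk x y) {a b : ℕ} (hab : a ≤ b) (hb : b ≤ p.length)
    (h : G.Adj (p.getVert a) (p.getVert b)) :
    (p.shortcut a b h).length = a + 1 + (p.length - b) := by
  simp only [shortcut, length_append, length_cons, take_length, drop_length]
  omega

lemma IsPath.shortcut {p : G.Walk x y} (hp : p.IsPath) {a b : ℕ} (hab : a < b)
    (hb : b ≤ p.length) (h : G.Adj (p.getVert a) (p.getVert b)) :
    (p.shortcut a b h).IsPath := by
  rw [isPath_def, Walk.shortcut, support_append, support_cons, List.tail_cons, support_take,
    drop_support_eq_support_drop_min, min_eq_left hb]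
  refine hp.support_nodup.sublist ?_
  calc List.Sublist (p.support.take (a + 1) ++ p.support.drop b)
        (p.support.take (a + 1) ++ p.support.drop (a + 1)) :=
        (List.drop_sublist_drop_left _ (by omega)).append_left _
    _ = p.support := List.take_append_drop _ _

end SimpleGraph.Walk

namespace SimpleGraph

variable {V : Type*} {G : SimpleGraph V} {k : ℕ}

lemma exists_adj_of_card_lt
    (hα : ∀ S : Finset V, (∀ u ∈ S, ∀ w ∈ S, u ≠ w → ¬ G.Adj u w) → S.card ≤ k)
    {S : Finset V} (hS : k < S.card) : ∃ u ∈ S, ∃ w ∈ S, u ≠ w ∧ G.Adj u w := by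
  by_contra! h
  exact hS.not_ge (hα S h)

lemma Walk.IsPath.exists_adj_getVert_two_mul
    (hα : ∀ S : Finset V, (∀ u ∈ S, ∀ w ∈ S, u ≠ w → ¬ G.Adj u w) → S.card ≤ k)
    {x y : V} {p : G.Walk x y} (hp : p.IsPath) (hk : 2 * k ≤ p.length) :
    ∃ i j, i < j ∧ j ≤ k ∧ G.Adj (p.getVert (2 * i)) (p.getVert (2 * j)) := by
  classical
  have hinj : Set.InjOn (fun i ↦ p.getVert (2 * i)) (Finset.range (k + 1)) := by
    intro i hi j hj hij
    simp only [Finset.coe_range, Set.mem_Iio] at hi hj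
    have := hp.getVert_injOn (by simp only [Set.mem_ofPred_eq]; omega)
      (by simp only [Set.mem_ofPred_eq]; omega) hij
    omega
  have hcard : k < ((Finset.range (k + 1)).image fun i ↦ p.getVert (2 * i)).card := by
    rw [Finset.card_image_of_injOn hinj, Finset.card_range]
    omega
  obtain ⟨_, hu, _, hw, hne, hadj⟩ := exists_adj_of_card_lt hα hcard
  obtain ⟨i, hi, rfl⟩ := Finset.mem_image.1 hu
  obtain ⟨j, hj, rfl⟩ := Finset.mem_image.1 hw
  rw [Finset.mem_range] at hi hj
  rcases lt_trichotomy i j with hij | rfl | hij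
  · exact ⟨i, j, hij, by omega, hadj⟩
  · exact absurd rfl hne
  · exact ⟨j, i, hij, by omega, hadj.symm⟩

lemma Walk.IsPath.exists_isPath_length_lt
    (hα : ∀ S : Finset V, (∀ u ∈ S, ∀ w ∈ S, u ≠ w → ¬ G.Adj u w) → S.card ≤ k)
    {x y : V} {p : G.Walk x y} (hp : p.IsPath) (hk : 2 * k ≤ p.length) :
    ∃ r : G.Walk x y, r.IsPath ∧ r.length < p.length ∧ p.length < r.length + 2 * k := by
  obtain ⟨i, j, hij, hjk, hadj⟩ := hp.exists_adj_getVert_two_mul hα hk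
  refine ⟨_, hp.shortcut (by omega) (by omega) hadj, ?_⟩
  rw [p.length_shortcut (by omega) (by omega) hadj]
  omega

end SimpleGraph

theorem stmt_6_general {V : Type*} (G : SimpleGraph V) (k : ℕ)
    (hα : ∀ S : Finset V, (∀ u ∈ S, ∀ w ∈ S, u ≠ w → ¬ G.Adj u w) → S.card ≤ k)
    (x y : V) (P : G.Walk x y) (hP : P.IsPath) (q : ℕ) (hq1 : 1 ≤ q)
    (hqp : q ≤ P.length) :
    ∃ Q : G.Walk x y, Q.IsPath ∧ q ≤ Q.length ∧ Q.length ≤ q + 2 * k - 2 := by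
  induction hL : P.length using Nat.strong_induction_on generalizing P with
  | _ L ih =>
    by_cases hshort : L ≤ q + 2 * k - 2
    · exact ⟨P, hP, hL ▸ hqp, hL ▸ hshort⟩
    · obtain ⟨R, hR, hlt, hgt⟩ := hP.exists_isPath_length_lt hα (by omega)
      exact ih R.length (hL ▸ hlt) R hR (by omega) rfl

/-- If `G` has independence number at most `k` and `P` is a path of length `p` from `x`
to `y`, then for every `1 ≤ q ≤ p` there is a path from `x` to `y` of some length `ℓ`
with `q ≤ ℓ ≤ q + 2k − 2`. -/
theorem stmt_6 {V : Type*} (G : SimpleGraph V) (k : ℕ) (hk : 1 ≤ k)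
    (hα : ∀ S : Finset V, (∀ u ∈ S, ∀ w ∈ S, u ≠ w → ¬ G.Adj u w) → S.card ≤ k)
    (x y : V) (P : G.Walk x y) (hP : P.IsPath) (q : ℕ) (hq1 : 1 ≤ q)
    (hqp : q ≤ P.length) :
    ∃ Q : G.Walk x y, Q.IsPath ∧ q ≤ Q.length ∧ Q.length ≤ q + 2 * k - 2 :=
  stmt_6_general G k hα x y P hP q hq1 hqp
end

section
/- If G is a bipartite graph with minimum degree at least d ≥ 1 and x is any vertex of G, then G contains a path of length at least 2d−1 starting at x. -/
/-!
Take a longest path `p` from `x`, ending at `y`. Maximality puts every neighbour of `y` on `p`,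
and in a two-coloured graph a neighbour of `y` can only sit at a position of parity opposite to
that of `y`, i.e. at an odd distance from the end of `p`. A path of length `ℓ` has only
`(ℓ + 1) / 2` such positions, so `d ≤ (ℓ + 1) / 2`.
-/

namespace SimpleGraph

variable {V : Type*} {G : SimpleGraph V}

theorem exists_isPath_forall_isPath_length_le [Fintype V] (x : V) :
    ∃ (y : V) (p : G.Walk x y), p.IsPath ∧
      ∀ (z : V) (q : G.Walk x z), q.IsPath → q.length ≤ p.length := by
  classical
  let IsPathLength : ℕ → Prop := fun n ↦ ∃ (y : V) (p : G.Walk x y), p.IsPath ∧ p.length = n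
  have hzero : IsPathLength 0 := ⟨x, .nil, .nil, rfl⟩
  obtain ⟨y, p, hp, hlen⟩ := Nat.findGreatest_spec (Nat.zero_le (Fintype.card V)) hzero
  exact ⟨y, p, hp, fun z q hq ↦ hlen ▸ Nat.le_findGreatest hq.length_lt.le ⟨z, q, hq, rfl⟩⟩

theorem Walk.IsPath.adj_mem_support_of_forall_isPath_length_le {x y z : V} {p : G.Walk x y}
    (hp : p.IsPath) (hmax : ∀ (w : V) (q : G.Walk x w), q.IsPath → q.length ≤ p.length)
    (hyz : G.Adj y z) : z ∈ p.support := by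
  by_contra hz
  have := hmax z _ (hp.concat hz hyz)
  rw [Walk.length_concat] at this
  omega

namespace Coloring

theorem exists_odd_sub_getVert_eq_of_adj (c : G.Coloring Bool) {x y z : V} (p : G.Walk x y)
    (hz : z ∈ p.support) (hyz : G.Adj y z) :
    ∃ i ≤ p.length, Odd (p.length - i) ∧ p.getVert i = z := by
  obtain ⟨i, rfl, hi⟩ := Walk.mem_support_iff_exists_getVert.mp hz
  refine ⟨i, hi, ?_, rfl⟩
  have hprefix := c.even_length_iff_congr (p.take i)
  have hwhole := c.even_length_iff_congr p
  have hcolor : ¬(c y = true ↔ c (p.getVert i) = true) := by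
    rw [← Bool.eq_iff_iff]
    exact c.valid hyz
  rw [Walk.take_length, min_eq_left hi] at hprefix
  rw [Nat.odd_sub hi, ← Nat.not_even_iff_odd]
  tauto

theorem ncard_neighborSet_le_of_forall_adj_mem_support (c : G.Coloring Bool) {x y : V}
    (p : G.Walk x y) (h : ∀ z, G.Adj y z → z ∈ p.support) :
    (G.neighborSet y).ncard ≤ (p.length + 1) / 2 := by
  classical
  let oddPositions := (Finset.range ((p.length + 1) / 2)).image
    fun j ↦ p.getVert (p.length - 1 - 2 * j)
  have hsub : G.neighborSet y ⊆ oddPositions := by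
    intro z hyz
    obtain ⟨i, hi, ⟨k, hk⟩, rfl⟩ := c.exists_odd_sub_getVert_eq_of_adj p (h z hyz) hyz
    simp only [oddPositions, Finset.coe_image, Finset.coe_range, Set.mem_image, Set.mem_Iio]
    exact ⟨k, by omega, by congr 1; omega⟩
  calc (G.neighborSet y).ncard ≤ (oddPositions : Set V).ncard :=
        Set.ncard_le_ncard hsub (Finset.finite_toSet _)
    _ ≤ (p.length + 1) / 2 := by
        rw [Set.ncard_coe_finset]
        exact Finset.card_image_le.trans (Finset.card_range _).le

end Coloring

end SimpleGraph

open SimpleGraph in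
theorem stmt_8_general {V : Type*} [Fintype V] (G : SimpleGraph V) (d : ℕ)
    (hbip : ∃ X : Set V, ∀ u v : V, G.Adj u v → (u ∈ X ↔ v ∉ X))
    (hδ : ∀ v : V, d ≤ (G.neighborSet v).ncard) (x : V) :
    ∃ (y : V) (p : G.Walk x y), p.IsPath ∧ 2 * d - 1 ≤ p.length := by
  classical
  obtain ⟨X, hX⟩ := hbip
  let c : G.Coloring Bool := Coloring.mk (fun v ↦ decide (v ∈ X)) fun {u v} huv ↦ by
    have := hX u v huv
    simp only [ne_eq, decide_eq_decide]
    tauto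
  obtain ⟨y, p, hp, hmax⟩ := exists_isPath_forall_isPath_length_le (G := G) x
  have hdeg := c.ncard_neighborSet_le_of_forall_adj_mem_support p
    fun _ ↦ hp.adj_mem_support_of_forall_isPath_length_le hmax
  exact ⟨y, p, hp, by have := hδ y; omega⟩

/-- If `G` is bipartite with minimum degree at least `d ≥ 1` and `x` is any vertex,
then `G` contains a path of length at least `2d−1` starting at `x`. -/
theorem stmt_8 {V : Type*} [Fintype V] (G : SimpleGraph V) (d : ℕ) (hd : 1 ≤ d)
    (hbip : ∃ X : Set V, ∀ u v : V, G.Adj u v → (u ∈ X ↔ v ∉ X))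
    (hδ : ∀ v : V, d ≤ (G.neighborSet v).ncard) (x : V) :
    ∃ (y : V) (p : G.Walk x y), p.IsPath ∧ 2 * d - 1 ≤ p.length :=
  stmt_8_general G d hbip hδ x
end

section
/- Let G be a graph containing no cycle of length ℓ, let T be a tree subgraph of G, v a vertex of T, and h < ℓ/2. If Z is the set of vertices at distance exactly h from v in T, then the induced subgraph G[Z] is (ℓ−2)-colourable; in particular Z contains an independent set of G of size at least |Z|/(ℓ−2). -/
/-!
For `x, y ∈ Z` let `d x y` be their distance in `T`. If `m` is the depth of the shallowest vertex
on the tree path from `x` to `y`, then `d x y = 2 (h - m)`. Hence the nonzero values of `d` lie in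
`[2, ℓ)`; `d` is an ultrametric on `Z`, because the tree path from `x` to `z` runs inside the tree
paths from `x` to `y` and from `y` to `z`; and the interior of the tree path from `x` to `y` lies
above depth `h`, outside `Z`. So a path of `G[Z]` of length `ℓ - d x y` from `x` to `y` would close
an `ℓ`-cycle.

If `G[Z]` were not `(ℓ - 2)`-colourable it would contain a connected induced subgraph `H` of
minimum degree at least `ℓ - 2` that is not `(ℓ - 2)`-colourable. Let `M` be the largest value of
`d` on `H`: "`d < M`" is an equivalence relation with at least two classes on `H`, and no path of
`H` of length `ℓ - M` joins two classes. If `M = 2` the classes are singletons, and the minimum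
degree provides a path of length `ℓ - 2`. If `M ≥ 3`, the minimum degree lets us extend any path
`x - y - z` through `y` to paths of length `ℓ - M` from `x` and from `z` to a common vertex, so
`x` and `z` lie in the same class; then `H` is bipartite, as an odd closed walk would put all of
`H` into one class. The independent set is the largest colour class.
-/

open Finset SimpleGraph

section Ultrametric

variable {U : Type*}

structure IsGappedUltrametric (d : U → U → ℕ) (ℓ : ℕ) : Prop where
  dist_self : ∀ x, d x x = 0
  two_le : ∀ x y, x ≠ y → 2 ≤ d x y
  lt : ∀ x y, d x y < ℓ
  comm : ∀ x y, d x y = d y x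
  le_max : ∀ x y z, d x z ≤ max (d x y) (d y z)

lemma IsGappedUltrametric.comp {U' : Type*} {d : U → U → ℕ} {ℓ : ℕ}
    (hd : IsGappedUltrametric d ℓ) {f : U' → U} (hf : Function.Injective f) :
    IsGappedUltrametric (fun x y => d (f x) (f y)) ℓ where
  dist_self _ := hd.dist_self _
  two_le _ _ hxy := hd.two_le _ _ (hf.ne hxy)
  lt _ _ := hd.lt _ _
  comm _ _ := hd.comm _ _
  le_max _ _ _ := hd.le_max _ _ _

end Ultrametric

namespace SimpleGraph

variable {V : Type*} {G : SimpleGraph V} {a b c u v w z : V}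

section Walks

lemma Walk.dist_add_dist_le_length (p : G.Walk a b) (hz : z ∈ p.support) :
    G.dist a z + G.dist z b ≤ p.length := by
  classical
  calc G.dist a z + G.dist z b ≤ (p.takeUntil z hz).length + (p.dropUntil z hz).length :=
        add_le_add (dist_le _) (dist_le _)
    _ = p.length := by rw [← Walk.length_append, p.take_spec hz]

lemma Walk.IsPath.append {p : G.Walk u v} {q : G.Walk v w} (hp : p.IsPath) (hq : q.IsPath)
    (hpq : ∀ z ∈ p.support, z ∈ q.support → z = v) : (p.append q).IsPath := by
  have hq' := hq.support_nodup
  rw [← q.cons_tail_support, List.nodup_cons] at hq'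
  rw [Walk.isPath_def, Walk.support_append, List.nodup_append]
  refine ⟨hp.support_nodup, hq'.2, fun z hzp y hyq hzy => ?_⟩
  subst hzy
  exact hq'.1 (hpq z hzp (List.mem_of_mem_tail hyq) ▸ hyq)

lemma Walk.IsPath.isCycle_append_reverse {p q : G.Walk u v} (hp : p.IsPath) (hq : q.IsPath)
    {s : Set V} (hps : ∀ z ∈ p.support, z ∈ s) (hqs : ∀ z ∈ q.support, z ∈ s → z = u ∨ z = v)
    (hlen : 3 ≤ p.length + q.length) : (p.append q.reverse).IsCycle := by
  refine hp.isCycle_append hq.reverse (List.disjoint_left.2 fun z hzp hzq => ?_)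
    (by rw [Walk.length_reverse]; omega)
  have hp' := hp.support_nodup
  rw [← p.cons_tail_support, List.nodup_cons] at hp'
  have hq' := hq.reverse.support_nodup
  rw [← q.reverse.cons_tail_support, List.nodup_cons] at hq'
  rcases hqs z (by simpa using List.mem_of_mem_tail hzq) (hps z (List.mem_of_mem_tail hzp))
    with rfl | rfl
  exacts [hp'.1 hzp, hq'.1 hzq]

end Walks

section Tree

lemma Connected.dist_add_dist_le_length_add (hG : G.Connected) (v : V) (p : G.Walk a b)
    (hz : z ∈ p.support) : G.dist v a + G.dist v b ≤ p.length + 2 * G.dist v z := by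
  have h₁ : G.dist v a ≤ G.dist v z + G.dist z a := hG.dist_triangle
  have h₂ : G.dist v b ≤ G.dist v z + G.dist z b := hG.dist_triangle
  have h₃ := p.dist_add_dist_le_length hz
  rw [dist_comm (u := z) (v := a)] at h₁
  omega

lemma IsTree.length_eq_dist (hG : G.IsTree) {p : G.Walk a b} (hp : p.IsPath) :
    p.length = G.dist a b := by
  obtain ⟨q, hq, hlen⟩ := hG.connected.exists_path_of_dist a b
  have : (⟨p, hp⟩ : G.Path a b) = ⟨q, hq⟩ := (hG.isAcyclic.subsingleton_path a b).elim _ _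
  rw [← hlen, show p = q from congrArg Subtype.val this]

lemma IsTree.dist_eq_dist_add_length (hG : G.IsTree) (v : V) {q : G.Walk w a} (hq : q.IsPath)
    (hmin : ∀ z ∈ q.support, G.dist v w ≤ G.dist v z) :
    G.dist v a = G.dist v w + q.length := by
  obtain ⟨g, hg, hglen⟩ := hG.connected.exists_path_of_dist v w
  have hgq : ∀ z ∈ g.support, z ∈ q.support → z = w := by
    intro z hzg hzq
    have := g.dist_add_dist_le_length hzg
    have := hmin z hzq
    exact hG.connected.dist_eq_zero_iff.1 (by omega)
  rw [← hG.length_eq_dist (hg.append hq hgq), Walk.length_append, hglen]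

lemma IsTree.exists_mem_support_length_add_eq (hG : G.IsTree) (v : V) {p : G.Walk a b}
    (hp : p.IsPath) :
    ∃ w ∈ p.support, p.length + 2 * G.dist v w = G.dist v a + G.dist v b := by
  classical
  obtain ⟨w, hw, hmin⟩ := p.support.toFinset.exists_min_image (G.dist v)
    ⟨a, List.mem_toFinset.2 p.start_mem_support⟩
  rw [List.mem_toFinset] at hw
  have hmin' : ∀ z ∈ p.support, G.dist v w ≤ G.dist v z :=
    fun z hz => hmin z (List.mem_toFinset.2 hz)
  have ha := hG.dist_eq_dist_add_length v (hp.takeUntil hw).reverse fun z hz =>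
    hmin' z (p.support_takeUntil_subset_support hw (by simpa using hz))
  have hb := hG.dist_eq_dist_add_length v (hp.dropUntil hw) fun z hz =>
    hmin' z (p.support_dropUntil_subset_support hw hz)
  have hlen := congrArg Walk.length (p.take_spec hw)
  rw [Walk.length_append] at hlen
  rw [Walk.length_reverse] at ha
  exact ⟨w, hw, by omega⟩

variable {h : ℕ}

lemma IsTree.exists_dist_add_two_mul_eq (hG : G.IsTree) (ha : G.dist v a = h)
    (hb : G.dist v b = h) : ∃ m, G.dist a b + 2 * m = 2 * h := by
  obtain ⟨p, hp, hlen⟩ := hG.connected.exists_path_of_dist a b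
  obtain ⟨w, -, hw⟩ := hG.exists_mem_support_length_add_eq v hp
  exact ⟨G.dist v w, by omega⟩

lemma IsTree.dist_le_max_of_dist_eq (hG : G.IsTree) (ha : G.dist v a = h) (hb : G.dist v b = h)
    (hc : G.dist v c = h) : G.dist a c ≤ max (G.dist a b) (G.dist b c) := by
  classical
  obtain ⟨pab, hab⟩ := hG.connected.exists_walk_length_eq_dist a b
  obtain ⟨pbc, hbc⟩ := hG.connected.exists_walk_length_eq_dist b c
  obtain ⟨w, hw, hac⟩ := hG.exists_mem_support_length_add_eq v (pab.append pbc).bypass_isPath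
  rw [hG.length_eq_dist (pab.append pbc).bypass_isPath] at hac
  rcases (Walk.mem_support_append_iff _ _).1 ((pab.append pbc).support_bypass_subset_support hw)
    with hw | hw
  · have := hG.connected.dist_add_dist_le_length_add v pab hw
    omega
  · have := hG.connected.dist_add_dist_le_length_add v pbc hw
    omega

lemma IsTree.dist_lt_of_mem_support (hG : G.IsTree) {p : G.Walk a b} (hp : p.IsPath)
    (ha : G.dist v a = h) (hb : G.dist v b = h) (hz : z ∈ p.support) (hza : z ≠ a)
    (hzb : z ≠ b) : G.dist v z < h := by
  classical
  obtain ⟨w, hw, hlen⟩ := hG.exists_mem_support_length_add_eq v hp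
  have hsplit := congrArg Walk.length (p.take_spec hz)
  rw [Walk.length_append] at hsplit
  have hA : (p.takeUntil z hz).length ≠ 0 := fun h0 => hza (Walk.eq_of_length_eq_zero h0).symm
  have hB : (p.dropUntil z hz).length ≠ 0 := fun h0 => hzb (Walk.eq_of_length_eq_zero h0)
  rw [← p.take_spec hz, Walk.mem_support_append_iff] at hw
  rcases hw with hw | hw
  · have := hG.connected.dist_add_dist_le_length_add v _ hw
    omega
  · have := hG.connected.dist_add_dist_le_length_add v _ hw
    omega

lemma IsTree.isGappedUltrametric_dist (hG : G.IsTree) (v : V) {h ℓ : ℕ} (hh : 2 * h < ℓ) :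
    IsGappedUltrametric (fun x y : {x // G.dist v x = h} => G.dist x y) ℓ where
  dist_self _ := dist_self
  two_le x y hxy := by
    obtain ⟨m, hm⟩ := hG.exists_dist_add_two_mul_eq x.2 y.2
    have := hG.connected.pos_dist_of_ne (Subtype.coe_injective.ne hxy)
    omega
  lt x y := by
    obtain ⟨m, hm⟩ := hG.exists_dist_add_two_mul_eq x.2 y.2
    omega
  comm _ _ := dist_comm
  le_max x y z := hG.dist_le_max_of_dist_eq x.2 y.2 z.2

lemma Subgraph.exists_isCycle_length_eq {T : G.Subgraph} (hT : T.coe.IsTree) (v : T.verts)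
    {h : ℕ} {x y : T.verts} (hx : T.coe.dist v x = h) (hy : T.coe.dist v y = h) (hxy : x ≠ y)
    {p : G.Walk x y} (hp : p.IsPath)
    (hpZ : ∀ z ∈ p.support, z ∈ {u | ∃ hu : u ∈ T.verts, T.coe.dist v ⟨u, hu⟩ = h}) :
    ∃ c : G.Walk x x, c.IsCycle ∧ c.length = p.length + T.coe.dist x y := by
  obtain ⟨R, hR, hRlen⟩ := hT.connected.exists_path_of_dist x y
  let B : G.Walk x y := R.map T.hom
  have hB : B.IsPath := hR.map Subgraph.hom_injective
  have hBlen : B.length = R.length := Walk.length_map _ _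
  have hBsupp : B.support = R.support.map T.hom := Walk.support_map _ _
  refine ⟨p.append B.reverse, hp.isCycle_append_reverse hB hpZ ?_ ?_, ?_⟩
  · rintro _ hzB ⟨_, hzh⟩
    rw [hBsupp, List.mem_map] at hzB
    obtain ⟨w, hw, rfl⟩ := hzB
    by_contra! hne
    exact (hT.dist_lt_of_mem_support hR hx hy hw (fun e => hne.1 (e ▸ rfl))
      (fun e => hne.2 (e ▸ rfl))).ne hzh
  · obtain ⟨m, hm⟩ := hT.exists_dist_add_two_mul_eq hx hy
    have := hT.connected.pos_dist_of_ne hxy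
    have : p.length ≠ 0 := fun h0 => hxy (Subtype.ext (Walk.eq_of_length_eq_zero h0))
    omega
  · rw [Walk.length_append, Walk.length_reverse, hBlen, hRlen]

end Tree

section Coloring

def ColorableOn (G : SimpleGraph V) (k : ℕ) (s : Finset V) : Prop :=
  ∃ c : V → Fin k, ∀ a ∈ s, ∀ b ∈ s, G.Adj a b → c a ≠ c b

variable {k : ℕ}

lemma ColorableOn.of_erase [DecidableEq V] [DecidableRel G.Adj] {s : Finset V}
    (hdeg : #{y ∈ s | G.Adj w y} < k) (hs : G.ColorableOn k (s.erase w)) :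
    G.ColorableOn k s := by
  obtain ⟨c, hc⟩ := hs
  obtain ⟨i, hi⟩ : ∃ i, i ∉ image c {y ∈ s | G.Adj w y} := by
    by_contra! h
    have := card_le_card (s := univ) fun i _ => h i
    rw [card_univ, Fintype.card_fin] at this
    exact (this.trans card_image_le).not_gt hdeg
  have hfresh : ∀ y ∈ s, G.Adj w y → c y ≠ i := fun y hy hwy hci =>
    hi (mem_image.2 ⟨y, mem_filter.2 ⟨hy, hwy⟩, hci⟩)
  refine ⟨Function.update c w i, fun a ha b hb hab => ?_⟩
  rcases eq_or_ne a w with rfl | haw <;> rcases eq_or_ne b a with rfl | hba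
  · exact (G.irrefl hab).elim
  · simpa [hba] using (hfresh b hb hab).symm
  · exact (G.irrefl hab).elim
  rcases eq_or_ne b w with rfl | hbw
  · simpa [haw] using hfresh a ha hab.symm
  simpa [haw, hbw] using hc a (mem_erase.2 ⟨haw, ha⟩) b (mem_erase.2 ⟨hbw, hb⟩) hab

lemma ColorableOn.union [DecidableEq V] {A B : Finset V} (hAB : ∀ a ∈ A, ∀ b ∈ B, ¬ G.Adj a b)
    (hA : G.ColorableOn k A) (hB : G.ColorableOn k B) : G.ColorableOn k (A ∪ B) := by
  obtain ⟨cA, hcA⟩ := hA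
  obtain ⟨cB, hcB⟩ := hB
  refine ⟨fun x => if x ∈ A then cA x else cB x, fun a ha b hb hab => ?_⟩
  rw [mem_union] at ha hb
  by_cases haA : a ∈ A <;> by_cases hbA : b ∈ A <;> simp only [haA, hbA, if_true, if_false]
  · exact hcA a haA b hbA hab
  · exact absurd hab (hAB a haA b (hb.resolve_left hbA))
  · exact absurd hab.symm (hAB b hbA a (ha.resolve_left haA))
  · exact hcB a (ha.resolve_left haA) b (hb.resolve_left hbA) hab

lemma degree_induce_coe_finset [Fintype V] [DecidableRel G.Adj] (s : Finset V)
    (x : (s : Set V)) : (G.induce (s : Set V)).degree x = #{y ∈ s | G.Adj x y} := by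
  classical
  have := congrArg card (G.map_neighborFinset_induce (s := (s : Set V)) x)
  rw [card_map] at this
  convert this using 2
  · convert (card_neighborFinset_eq_degree (G.induce (s : Set V)) x).symm
  · ext y
    simp [and_comm]

/-- A minimal induced subgraph that is not `k`-colourable is connected and has minimum
degree at least `k`. -/
theorem colorable_of_forall_connected_induce [Fintype V] [DecidableRel G.Adj] (hk : k ≠ 0)
    (h : ∀ s : Finset V, (G.induce (s : Set V)).Connected →
      (∀ x, k ≤ (G.induce (s : Set V)).degree x) → (G.induce (s : Set V)).Colorable k) :
    G.Colorable k := by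
  classical
  suffices ∀ s, G.ColorableOn k s by
    obtain ⟨c, hc⟩ := this univ
    exact ⟨Coloring.mk c fun hab => hc _ (mem_univ _) _ (mem_univ _) hab⟩
  intro s
  induction s using Finset.strongInduction with | H s ih =>
  rcases s.eq_empty_or_nonempty with rfl | ⟨a, ha⟩
  · exact ⟨fun _ => ⟨0, Nat.pos_of_ne_zero hk⟩, by simp⟩
  by_cases hlow : ∃ w ∈ s, #{y ∈ s | G.Adj w y} < k
  · obtain ⟨w, hw, hdeg⟩ := hlow
    exact .of_erase hdeg (ih _ (erase_ssubset hw))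
  push Not at hlow
  by_cases hreach : ∀ b (hb : b ∈ s), (G.induce (s : Set V)).Reachable ⟨a, ha⟩ ⟨b, hb⟩
  · obtain ⟨c⟩ := h s ((connected_iff_exists_forall_reachable _).2 ⟨⟨a, ha⟩, fun b => hreach b b.2⟩)
      fun x => by rw [degree_induce_coe_finset]; exact hlow x x.2
    refine ⟨fun x => if hx : x ∈ s then c ⟨x, hx⟩ else ⟨0, Nat.pos_of_ne_zero hk⟩,
      fun x hx y hy hxy => ?_⟩
    simpa [hx, hy] using c.valid (show (G.induce (s : Set V)).Adj ⟨x, hx⟩ ⟨y, hy⟩ from hxy)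
  push Not at hreach
  obtain ⟨b, hb, hab⟩ := hreach
  let A := {x ∈ s | ∃ hx : x ∈ s, (G.induce (s : Set V)).Reachable ⟨a, ha⟩ ⟨x, hx⟩}
  have hAs : A ⊆ s := filter_subset _ _
  have hcross : ∀ x ∈ A, ∀ y ∈ s \ A, ¬ G.Adj x y := by
    intro x hx y hy hxy
    obtain ⟨hx, hax⟩ := (mem_filter.1 hx).2
    rw [mem_sdiff] at hy
    exact hy.2 (mem_filter.2 ⟨hy.1, hy.1, hax.trans (Adj.reachable (G := G.induce _) hxy)⟩)
  have hA : A ⊂ s := Finset.ssubset_iff_subset_ne.2 ⟨hAs, fun hA =>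
    hab (mem_filter.1 (hA ▸ hb)).2.2⟩
  have hsA : s \ A ⊂ s := sdiff_ssubset hAs ⟨a, mem_filter.2 ⟨ha, ha, .rfl⟩⟩
  simpa [union_sdiff_of_subset hAs] using (ih A hA).union hcross (ih _ hsA)

lemma exists_isPath_length_eq_of_le_degree [DecidableEq V] [LocallyFinite G] {m : ℕ}
    (hdeg : ∀ x, m ≤ G.degree x) {B : Finset V} (ha : a ∉ B) :
    ∀ n, n + #B ≤ m → ∃ b, ∃ p : G.Walk a b, p.IsPath ∧ p.length = n ∧ ∀ z ∈ p.support, z ∉ B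
  | 0, _ => ⟨a, .nil, .nil, rfl, by simpa using ha⟩
  | n + 1, hn => by
    obtain ⟨b, p, hp, hlen, hpB⟩ := exists_isPath_length_eq_of_le_degree hdeg ha n (by omega)
    obtain ⟨y, hy⟩ : (G.neighborFinset b \ (p.support.toFinset ∪ B)).Nonempty := by
      rw [nonempty_iff_ne_empty, Ne, sdiff_eq_empty_iff_subset]
      intro hsub
      have hsub' : G.neighborFinset b ⊆ p.support.toFinset.erase b ∪ B := fun y hy =>
        mem_union.2 ((mem_union.1 (hsub hy)).imp
          (mem_erase.2 ⟨((mem_neighborFinset _ _ _).1 hy).ne', ·⟩) id)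
      have hsupp : #(p.support.toFinset.erase b) ≤ n := by
        rw [card_erase_of_mem (List.mem_toFinset.2 p.end_mem_support)]
        have := p.support.toFinset_card_le
        rw [Walk.length_support, hlen] at this
        omega
      have := (card_le_card hsub').trans (card_union_le _ _)
      have := hdeg b
      rw [← card_neighborFinset_eq_degree] at this
      omega
    simp only [mem_sdiff, mem_union, List.mem_toFinset, not_or, mem_neighborFinset] at hy
    refine ⟨y, p.concat hy.1, hp.concat hy.2.1 hy.1, by simp [hlen], fun z hz => ?_⟩
    rw [Walk.support_concat, List.mem_append, List.mem_singleton] at hz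
    rcases hz with hz | rfl
    exacts [hpB z hz, hy.2.2]

lemma Walk.rel_of_even_length {r : V → V → Prop} (hr : Equivalence r)
    (hr₂ : ∀ x y z, G.Adj x y → G.Adj y z → r x z) (p : G.Walk a b) (hp : Even p.length) :
    r a b := by
  suffices h : ∀ {a b} (p : G.Walk a b),
      (Even p.length → r a b) ∧ ∀ x, G.Adj x a → ¬ Even p.length → r x b from (h p).1 hp
  intro a b p
  induction p with
  | nil => exact ⟨fun _ => hr.refl _, fun _ _ h => absurd ⟨0, rfl⟩ h⟩
  | cons hadj q ih =>
    rw [Walk.length_cons, Nat.even_add_one, not_not]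
    exact ⟨ih.2 _ hadj, fun x hx hq => hr.trans (hr₂ _ _ _ hx hadj) (ih.1 hq)⟩

lemma Connected.colorable_two_or_forall_rel (hG : G.Connected) {r : V → V → Prop}
    (hr : Equivalence r) (hr₂ : ∀ x y z, G.Adj x y → G.Adj y z → r x z) :
    G.Colorable 2 ∨ ∀ a b, r a b := by
  rw [two_colorable_iff_forall_loop_even, or_iff_not_imp_left]
  push Not
  rintro ⟨u, c, hc⟩ a b
  obtain ⟨q₁⟩ := hG.preconnected a u
  obtain ⟨q₂⟩ := hG.preconnected u b
  by_cases hq : Even (q₁.append q₂).length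
  · exact (q₁.append q₂).rel_of_even_length hr hr₂ hq
  · refine ((q₁.append c).append q₂).rel_of_even_length hr hr₂ ?_
    simp only [Walk.length_append, Nat.even_add] at hq hc ⊢
    tauto

theorem Connected.colorable_of_isPath_length_add_ne [Fintype V] [DecidableRel G.Adj]
    (hG : G.Connected) {ℓ : ℕ} (hℓ : 3 ≤ ℓ)
    (hdeg : ∀ x, ℓ - 2 ≤ G.degree x) {d : V → V → ℕ} (hd : IsGappedUltrametric d ℓ)
    (hpath : ∀ x y (p : G.Walk x y), p.IsPath → x ≠ y → p.length + d x y ≠ ℓ) :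
    G.Colorable (ℓ - 2) := by
  classical
  have := hG.nonempty
  obtain ⟨⟨a, b⟩, hmax⟩ := Finite.exists_max fun q : V × V => d q.1 q.2
  set M := d a b
  have hdM : ∀ x y, d x y ≤ M := fun x y => hmax (x, y)
  have hMℓ : M < ℓ := hd.lt a b
  have hM : 2 ≤ M := by
    obtain ⟨y, hy⟩ := (G.degree_pos_iff_exists_adj a).1 (by have := hdeg a; omega)
    exact (hd.two_le a y hy.ne).trans (hdM a y)
  let r x y := d x y < M
  have hr : Equivalence r :=
    ⟨fun x => by simp only [r, hd.dist_self]; omega, fun {x y} h => (hd.comm y x).trans_lt h,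
      fun h₁ h₂ => (hd.le_max _ _ _).trans_lt (max_lt h₁ h₂)⟩
  have hr_path : ∀ x y (p : G.Walk x y), p.IsPath → p.length = ℓ - M → r x y := by
    intro x y p hp hlen
    by_contra hxy
    have hne : x ≠ y := by
      rintro rfl
      exact hxy (hr.refl x)
    exact hpath x y p hp hne (by have := hdM x y; simp only [r] at hxy; omega)
  by_cases hM₂ : M = 2
  · obtain ⟨c, p, hp, hlen, -⟩ := exists_isPath_length_eq_of_le_degree hdeg
      (notMem_empty a) (ℓ - M) (by simp; omega)
    have hac : a = c := by
      by_contra hac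
      have := hd.two_le a c hac
      have := hr_path a c p hp hlen
      simp only [r] at this
      omega
    subst hac
    rw [(Walk.isPath_iff_nil.1 hp).eq_nil, Walk.length_nil] at hlen
    omega
  · refine (hG.colorable_two_or_forall_rel hr fun x y z hxy hyz => ?_).elim
      (fun h => h.mono (by omega)) fun h => absurd (h a b) (lt_irrefl M)
    by_cases hxz : x = z
    · exact hxz ▸ hr.refl x
    obtain ⟨c, q, hq, hlen, hqxz⟩ := exists_isPath_length_eq_of_le_degree hdeg
      (a := y) (B := {x, z}) (by simp [hxy.ne', hyz.ne]) (ℓ - M - 1)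
      ((Nat.add_le_add_left card_le_two _).trans (by omega))
    have hx : x ∉ q.support := fun h => hqxz x h (by simp)
    have hz : z ∉ q.reverse.support := by simpa using fun h => hqxz z h (by simp)
    refine hr.trans (hr_path x c (.cons hxy q) ?_ ?_) (hr_path c z (q.reverse.concat hyz) ?_ ?_)
    · exact Walk.cons_isPath_iff _ _ |>.2 ⟨hq, hx⟩
    · simp only [Walk.length_cons, hlen]; omega
    · exact hq.reverse.concat hz hyz
    · simp only [Walk.length_concat, Walk.length_reverse, hlen]; omega

theorem colorable_of_isPath_length_add_ne [Fintype V] {ℓ : ℕ} (hℓ : 3 ≤ ℓ) {d : V → V → ℕ}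
    (hd : IsGappedUltrametric d ℓ)
    (hpath : ∀ x y (p : G.Walk x y), p.IsPath → x ≠ y → p.length + d x y ≠ ℓ) :
    G.Colorable (ℓ - 2) := by
  classical
  exact colorable_of_forall_connected_induce (by omega) fun s hs hdeg =>
    hs.colorable_of_isPath_length_add_ne hℓ hdeg (hd.comp Subtype.val_injective)
      fun x y p hp hxy => by
        let P : G.Walk x y := p.map (Embedding.induce _).toHom
        have hP : P.length = p.length := Walk.length_map _ _
        exact hP ▸ hpath x y P (hp.map (Embedding.induce (G := G) _).injective)
          (Subtype.coe_injective.ne hxy)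

lemma exists_isIndepSet_ncard_le_mul_ncard {s : Set V} (hs : s.Finite) {k : ℕ}
    (hcol : (G.induce s).Colorable k) : ∃ S ⊆ s, G.IsIndepSet S ∧ s.ncard ≤ k * S.ncard := by
  classical
  obtain ⟨C⟩ := hcol
  have := hs.fintype
  rcases k.eq_zero_or_pos with rfl | hk
  · have : IsEmpty s := ⟨fun x => (C x).elim0⟩
    exact ⟨∅, by simp [Set.isEmpty_coe_sort.1 this]⟩
  have : Nonempty (Fin k) := ⟨⟨0, hk⟩⟩
  obtain ⟨c, hc⟩ := Fintype.exists_le_card_fiber_of_nsmul_le_card C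
    (b := (Fintype.card s : ℚ) / k) (by rw [nsmul_eq_mul, Fintype.card_fin]; field_simp; rfl)
  refine ⟨((univ.filter (C · = c)).map (.subtype _) : Set V), fun x hx => ?_,
    fun x hx y hy hxy => ?_, ?_⟩
  · simp only [coe_map, Set.mem_image] at hx
    obtain ⟨x, -, rfl⟩ := hx
    exact x.2
  · simp only [coe_map, Set.mem_image, coe_filter] at hx hy
    obtain ⟨x, hx, rfl⟩ := hx
    obtain ⟨y, hy, rfl⟩ := hy
    exact fun hadj => C.valid hadj (by simp_all)
  · rw [Set.ncard_coe_finset, card_map, ← Nat.card_coe_set_eq, Nat.card_eq_fintype_card]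
    rw [div_le_iff₀ (by positivity)] at hc
    exact_mod_cast hc.trans_eq (mul_comm _ _)

end Coloring

end SimpleGraph

/-- If `G` has no cycle of length `ℓ`, `T` is a tree subgraph of `G`, `v ∈ T`,
`h < ℓ/2`, and `Z` is the set of vertices at distance exactly `h` from `v` in `T`,
then `G[Z]` is `(ℓ−2)`-colourable, and `Z` contains an independent set of `G` of size
at least `|Z|/(ℓ−2)`. -/
theorem stmt_11 {V : Type*} [Fintype V] (G : SimpleGraph V) (ℓ h : ℕ) (hℓ : 3 ≤ ℓ)
    (hno : ¬ ∃ (v : V) (c : G.Walk v v), c.IsCycle ∧ c.length = ℓ)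
    (T : G.Subgraph) (hT : T.coe.IsTree) (v : T.verts) (hh : 2 * h < ℓ)
    (Z : Set V) (hZ : Z = {u : V | ∃ hu : u ∈ T.verts, T.coe.dist v ⟨u, hu⟩ = h}) :
    (G.induce Z).Colorable (ℓ - 2) ∧
      ∃ S : Set V, S ⊆ Z ∧ (∀ u ∈ S, ∀ w ∈ S, u ≠ w → ¬ G.Adj u w) ∧
        Z.ncard ≤ (ℓ - 2) * S.ncard := by
  classical
  have hmem : ∀ u ∈ Z, ∃ hu : u ∈ T.verts, T.coe.dist v ⟨u, hu⟩ = h := fun u hu => by rwa [hZ] at hu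
  let toLevel : Z → {x // T.coe.dist v x = h} := fun u => ⟨⟨u, (hmem u u.2).1⟩, (hmem u u.2).2⟩
  have htoLevel : Function.Injective toLevel := fun x y hxy => by
    simpa [toLevel, Subtype.ext_iff] using hxy
  have hcol : (G.induce Z).Colorable (ℓ - 2) := colorable_of_isPath_length_add_ne hℓ
    ((hT.isGappedUltrametric_dist v hh).comp htoLevel) fun x y p hp hxy hlen => by
      let P : G.Walk x y := p.map (Embedding.induce _).toHom
      have hPlen : P.length = p.length := Walk.length_map _ _
      have hPsupp : P.support = p.support.map (↑) := Walk.support_map _ _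
      obtain ⟨c, hc, hclen⟩ := T.exists_isCycle_length_eq hT v (toLevel x).2 (toLevel y).2
        (Subtype.coe_injective.ne (htoLevel.ne hxy)) (p := P)
        (hp.map (Embedding.induce (G := G) _).injective) fun z hz => by
          rw [hPsupp, List.mem_map] at hz
          obtain ⟨z, -, rfl⟩ := hz
          exact hmem z z.2
      exact hno ⟨x, c, hc, by rw [hclen, hPlen]; exact hlen⟩
  obtain ⟨S, hSZ, hS, hcard⟩ := exists_isIndepSet_ncard_le_mul_ncard (Set.toFinite _) hcol
  exact ⟨hcol, S, hSZ, fun u hu w hw => hS hu hw, hcard⟩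
end
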